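/- Fix k ≥ 3, n, p ∈ (0,1), and an enumeration e_1,…,e_N of all k-element subsets of [n], where N = C(n,k). For 0 ≤ i ≤ N define the random directed k-uniform hypergraph Γ_i on [n] as follows: for each j ≤ i and each of the k! orderings of e_j, the corresponding arc is included with probability p independently; for each j > i, with probability p all k! orderings of e_j are included as arcs and otherwise none are, independently over j. Then for every 1 ≤ i ≤ N, the probability that Γ_i contains a directed loose Hamilton cycle is at least the probability that Γ_{i−1} contains a directed loose Hamilton cycle. -/

import Mathlib

open MeasureTheory Filter

/-- The Bernoulli measure on `Bool` with success probability `p` (a probability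
measure whenever `0 ≤ p ≤ 1`). -/
noncomputable def bern (p : ℝ) : Measure Bool :=
  ENNReal.ofReal p • Measure.dirac true + ENNReal.ofReal (1 - p) • Measure.dirac false

/-- The ordered `k`-tuples of distinct elements of `Fin n`, i.e. the possible arcs of a
directed `k`-uniform hypergraph on `Fin n`. -/
abbrev InjTup (n k : ℕ) := {f : Fin k → Fin n // Function.Injective f}

/-- The random `k`-uniform hypergraph `H^{(k)}_{n,p}`: each `k`-element subset of
`Fin n` is an edge with probability `p`, independently of all others. -/
noncomputable def hyperMeasure (n k : ℕ) (p : ℝ) :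
    Measure ({S : Finset (Fin n) // S.card = k} → Bool) :=
  Measure.pi fun _ => bern p

/-- The random directed `k`-uniform hypergraph `D^{(k)}_{n,p}`: each ordered `k`-tuple
of distinct elements of `Fin n` is an arc with probability `p`, independently of all
others. -/
noncomputable def dirHyperMeasure (n k : ℕ) (p : ℝ) :
    Measure (InjTup n k → Bool) :=
  Measure.pi fun _ => bern p

/-- A loose Hamilton cycle in a `k`-uniform hypergraph with vertex type `V` and edge
predicate `E`: a cyclic ordering of all vertices together with edges, each consisting of
`k` consecutive vertices, consecutive edges meeting in exactly one vertex and every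
vertex covered. -/
def HasLooseHamCycle (k : ℕ) {V : Type*} [Fintype V] [DecidableEq V]
    (E : Finset V → Prop) : Prop :=
  ∃ (m : ℕ) (σ : ZMod (Fintype.card V) ≃ V), 0 < m ∧ Fintype.card V = m * (k - 1) ∧
    ∀ i : Fin m,
      Function.Injective (fun t : Fin k => σ (((i : ℕ) * (k - 1) + (t : ℕ) : ℕ))) ∧
      E (Finset.image (fun t : Fin k => σ (((i : ℕ) * (k - 1) + (t : ℕ) : ℕ))) Finset.univ)

/-- A directed loose Hamilton cycle in a directed `k`-uniform hypergraph with vertex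
type `V` and arc predicate `A`: a cyclic ordering of all vertices together with arcs,
each arc being a block of `k` consecutive vertices taken in the order of the cyclic
ordering, such that consecutive arcs meet in exactly one vertex, the last vertex of each
arc is the first vertex of the next one, and every vertex is covered. -/
def HasDirLooseHamCycle (k : ℕ) {V : Type*} [Fintype V]
    (A : (Fin k → V) → Prop) : Prop :=
  ∃ (m : ℕ) (σ : ZMod (Fintype.card V) ≃ V), 0 < m ∧ Fintype.card V = m * (k - 1) ∧
    ∀ i : Fin m,
      Function.Injective (fun t : Fin k => σ (((i : ℕ) * (k - 1) + (t : ℕ) : ℕ))) ∧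
      A (fun t : Fin k => σ (((i : ℕ) * (k - 1) + (t : ℕ) : ℕ)))

/-- The `k!` orderings of a `k`-element subset `S` of `Fin n`: the injective `k`-tuples
whose image is `S`. -/
abbrev OrdOf (n k : ℕ) (S : Finset (Fin n)) :=
  {f : Fin k → Fin n // Function.Injective f ∧ Finset.image f Finset.univ = S}

/-- For an enumeration `e` of the `k`-element subsets of `Fin n` (with
`N = Nat.choose n k`), the random directed `k`-uniform hypergraph `Γ_i`:  for the first
`i` sets `e_j` (i.e. `(j : ℕ) < i`), each of the `k!` orderings of `e_j` is an arc with
probability `p` independently; for every later set, with probability `p` all of its `k!`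
orderings are arcs and otherwise none, independently over the sets.  A sample point
records, for each `k`-subset and each of its orderings, whether that arc is present. -/
noncomputable def gammaMeasure (n k : ℕ) (p : ℝ)
    (e : Fin (Nat.choose n k) ≃ {S : Finset (Fin n) // S.card = k}) (i : ℕ) :
    Measure (∀ j : Fin (Nat.choose n k), OrdOf n k (e j).1 → Bool) :=
  Measure.pi fun j =>
    if (j : ℕ) < i then Measure.pi fun _ => bern p
    else Measure.map (fun (b : Bool) (_ : OrdOf n k (e j).1) => b) (bern p)

/-- The event that `Γ_i` contains a directed loose Hamilton cycle: the arcs of the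
sampled directed hypergraph are those ordered `k`-tuples appearing as a present ordering
of some `k`-subset. -/
def gammaHamEvent (n k : ℕ)
    (e : Fin (Nat.choose n k) ≃ {S : Finset (Fin n) // S.card = k}) :
    Set (∀ j : Fin (Nat.choose n k), OrdOf n k (e j).1 → Bool) :=
  {ω | HasDirLooseHamCycle k fun f : Fin k → Fin n =>
    ∃ (j : Fin (Nat.choose n k))
      (h : Function.Injective f ∧ Finset.image f Finset.univ = (e j).1),
      ω j ⟨f, h⟩ = true}

/-! `Γ_{i-1}` and `Γ_i` differ only in the law of the block of arcs over `e_{i-1}`: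
all-or-nothing with probability `p` versus independent coins. Condition on all other arcs. The
cycle event is increasing, so the comparison is trivial unless it holds with all orderings of
`e_{i-1}` present and fails with none. Then a cycle witnessing it uses `e_{i-1}` as an arc, and for
`k ≥ 3` only once, since distinct arcs of a loose cycle have distinct vertex sets. So the presence
of that single ordering already suffices; it has probability `p` under `Γ_i`, which is the
conditional probability of the event under `Γ_{i-1}`. -/

namespace MeasureTheory.Measure

variable {ι : Type*} [DecidableEq ι] {X : ι → Type*} [∀ i, MeasurableSpace (X i)]

theorem lmarginal_congr_measure {μ ν : ∀ i, Measure (X i)} {s : Finset ι}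
    (h : ∀ i ∈ s, μ i = ν i) (f : (∀ i, X i) → ENNReal) :
    ∫⋯∫⁻_s, f ∂μ = ∫⋯∫⁻_s, f ∂ν := by
  ext x
  simp only [lmarginal]
  congr 2
  ext i : 1
  exact h i i.2

theorem pi_le_pi_of_update [Fintype ι] {μ ν : ∀ i, Measure (X i)} [∀ i, SigmaFinite (μ i)]
    [∀ i, SigmaFinite (ν i)] (J : ι) (hμν : ∀ i ≠ J, μ i = ν i) {E : Set (∀ i, X i)}
    (hE : MeasurableSet E)
    (hJ : ∀ x, μ J {v | Function.update x J v ∈ E} ≤ ν J {v | Function.update x J v ∈ E}) :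
    Measure.pi μ E ≤ Measure.pi ν E := by
  rcases isEmpty_or_nonempty (∀ i, X i) with h | ⟨⟨x⟩⟩
  · simp [Set.eq_empty_of_isEmpty E]
  have hsection : ∀ (κ : ∀ i, Measure (X i)) [∀ i, SigmaFinite (κ i)], Measure.pi κ E =
      (∫⋯∫⁻_(Finset.univ.erase J), (fun y ↦ κ J {v | Function.update y J v ∈ E}) ∂κ) x := by
    intro κ _
    have hind : Measurable (E.indicator (1 : (∀ i, X i) → ENNReal)) :=
      measurable_one.indicator hE
    rw [← lintegral_indicator_one hE, lintegral_eq_lmarginal_univ x,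
      lmarginal_erase' _ hind (Finset.mem_univ J)]
    congr 1
    ext y
    exact lintegral_indicator_one (measurable_update y hE)
  rw [hsection μ, hsection ν,
    lmarginal_congr_measure fun i hi ↦ hμν i (Finset.ne_of_mem_erase hi)]
  exact lmarginal_mono (fun y ↦ hJ y) x

theorem map_const_le_pi {β : Type*} [Fintype β] (μ : Measure Bool) [IsProbabilityMeasure μ]
    {T : Set (β → Bool)} (hT : IsUpperSet T)
    (hcyl : ⊤ ∈ T → ⊥ ∉ T → ∃ b, {v : β → Bool | v b = true} ⊆ T) :
    μ.map (fun (c : Bool) (_ : β) => c) T ≤ Measure.pi (fun _ => μ) T := by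
  rw [map_apply .of_discrete .of_discrete]
  by_cases hbot : ⊥ ∈ T
  · rw [hT.bot_mem.mp hbot, measure_univ]
    exact prob_le_one
  by_cases htop : ⊤ ∈ T
  · obtain ⟨b, hb⟩ := hcyl htop hbot
    have hconst : (fun (c : Bool) (_ : β) => c) ⁻¹' T ⊆ {true} := by
      rintro (_ | _) hc
      · exact absurd hc hbot
      · rfl
    calc μ ((fun (c : Bool) (_ : β) => c) ⁻¹' T) ≤ μ {true} := measure_mono hconst
      _ = Measure.pi (fun _ => μ) (Function.eval b ⁻¹' {true}) :=
        ((measurePreserving_eval (fun _ => μ) b).measure_preimage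
          (measurableSet_singleton true).nullMeasurableSet).symm
      _ ≤ Measure.pi (fun _ => μ) T := measure_mono hb
  · rw [hT.top_notMem.mp htop]
    simp

end MeasureTheory.Measure

theorem isProbabilityMeasure_bern {p : ℝ} (h0 : 0 ≤ p) (h1 : p ≤ 1) :
    IsProbabilityMeasure (bern p) := by
  constructor
  simp only [bern, Measure.add_apply, Measure.smul_apply, measure_univ, smul_eq_mul, mul_one]
  rw [← ENNReal.ofReal_add h0 (by linarith)]
  norm_num

theorem ZMod.eq_of_image_add_eq {c k : ℕ} (hk : 0 < k) (hkc : k < c) {a b : ZMod c}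
    (h : Finset.univ.image (fun t : Fin k => a + (t : ℕ)) =
      Finset.univ.image (fun t : Fin k => b + (t : ℕ))) :
    a = b := by
  have hb : b ∈ Finset.univ.image (fun t : Fin k => a + (t : ℕ)) :=
    h ▸ Finset.mem_image.mpr ⟨⟨0, hk⟩, Finset.mem_univ _, by simp⟩
  obtain ⟨t, -, rfl⟩ := Finset.mem_image.mp hb
  obtain ht | ht := Nat.eq_zero_or_pos (t : ℕ)
  · simp [ht]
  -- otherwise `a + k = b + (k - t)` lies in the interval of `b`, hence in that of `a`
  have hak : a + (k : ℕ) ∈ Finset.univ.image (fun t : Fin k => a + (t : ℕ)) := by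
    rw [h]
    refine Finset.mem_image.mpr ⟨⟨k - t, by omega⟩, Finset.mem_univ _, ?_⟩
    push_cast [Nat.cast_sub t.isLt.le]
    ring
  obtain ⟨s, -, hs⟩ := Finset.mem_image.mp hak
  have hsk := congrArg ZMod.val (add_left_cancel hs)
  rw [ZMod.val_cast_of_lt (s.isLt.trans hkc), ZMod.val_cast_of_lt hkc] at hsk
  exact absurd hsk s.isLt.ne

def looseArc {V : Type*} {c : ℕ} (σ : ZMod c ≃ V) (k i : ℕ) (t : Fin k) : V :=
  σ ((i * (k - 1) + t : ℕ) : ZMod c)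

theorem looseArc_image_injective {V : Type*} [DecidableEq V] {k m c : ℕ} (hk : 3 ≤ k)
    (hm : 0 < m) (hc : c = m * (k - 1)) (σ : ZMod c ≃ V)
    (hinj : ∀ i : Fin m, Function.Injective (looseArc σ k i)) :
    Function.Injective fun i : Fin m => Finset.univ.image (looseArc σ k i) := by
  intro i i' himg
  have hm2 : 2 ≤ m := by
    by_contra! hm1
    obtain rfl : m = 1 := by omega
    obtain rfl : c = k - 1 := by omega
    -- a single arc would start and end at the same position
    have hwrap := @hinj ⟨0, hm⟩ ⟨0, by omega⟩ ⟨k - 1, by omega⟩ (congrArg σ (by simp))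
    simp only [Fin.mk.injEq] at hwrap
    omega
  have hkc : k < c := by
    have := Nat.mul_le_mul_right (k - 1) hm2
    omega
  have hpos : Finset.univ.image (fun t : Fin k => (((i : ℕ) * (k - 1) : ℕ) : ZMod c) + (t : ℕ)) =
      Finset.univ.image (fun t : Fin k => (((i' : ℕ) * (k - 1) : ℕ) : ZMod c) + (t : ℕ)) := by
    apply Finset.image_injective σ.injective
    rw [Finset.image_image, Finset.image_image]
    convert himg using 2 <;> funext t <;> simp [looseArc]
  have hstart := congrArg ZMod.val (ZMod.eq_of_image_add_eq (by omega) hkc hpos)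
  have hlt : ∀ j : Fin m, (j : ℕ) * (k - 1) < c := fun j ↦
    hc ▸ Nat.mul_lt_mul_of_pos_right j.isLt (by omega)
  rw [ZMod.val_cast_of_lt (hlt i), ZMod.val_cast_of_lt (hlt i')] at hstart
  exact Fin.ext (Nat.eq_of_mul_eq_mul_right (by omega) hstart)

section GammaHamEvent

variable {n k : ℕ} (e : Fin (Nat.choose n k) ≃ {S : Finset (Fin n) // S.card = k})

theorem isUpperSet_gammaHamEvent : IsUpperSet (gammaHamEvent n k e) := by
  rintro ω ω' hωω' ⟨m, σ, hm, hcard, harc⟩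
  refine ⟨m, σ, hm, hcard, fun i ↦ ⟨(harc i).1, ?_⟩⟩
  obtain ⟨j, hj, hω⟩ := (harc i).2
  have hle := hωω' j ⟨_, hj⟩
  rw [hω] at hle
  exact ⟨j, hj, top_le_iff.mp hle⟩

theorem exists_ordering_forall_update_mem_gammaHamEvent (hk : 3 ≤ k) (J : Fin (Nat.choose n k))
    {ω : ∀ j, OrdOf n k (e j).1 → Bool} (hω : ω ∈ gammaHamEvent n k e)
    (hJ : Function.update ω J ⊥ ∉ gammaHamEvent n k e) :
    ∃ f : OrdOf n k (e J).1, ∀ v : OrdOf n k (e J).1 → Bool, v f = true →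
      Function.update ω J v ∈ gammaHamEvent n k e := by
  obtain ⟨m, σ, hm, hcard, harc⟩ := hω
  have hunique := looseArc_image_injective hk hm hcard σ fun i ↦ (harc i).1
  -- some arc of the cycle has vertex set `e J`, otherwise the cycle survives deleting its arcs
  obtain ⟨i₀, hi₀⟩ : ∃ i₀ : Fin m, Finset.univ.image (looseArc σ k i₀) = (e J).1 := by
    by_contra! hnone
    refine hJ ⟨m, σ, hm, hcard, fun i ↦ ⟨(harc i).1, ?_⟩⟩
    obtain ⟨j, hj, hωj⟩ := (harc i).2
    have hjJ : j ≠ J := by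
      rintro rfl
      exact hnone i hj.2
    exact ⟨j, hj, by rwa [Function.update_of_ne hjJ]⟩
  refine ⟨⟨looseArc σ k i₀, (harc i₀).1, hi₀⟩, fun v hv ↦
    ⟨m, σ, hm, hcard, fun i ↦ ⟨(harc i).1, ?_⟩⟩⟩
  obtain rfl | hi := eq_or_ne i i₀
  · exact ⟨J, ⟨(harc i).1, hi₀⟩, by rwa [Function.update_self]⟩
  · obtain ⟨j, hj, hωj⟩ := (harc i).2
    have hjJ : j ≠ J := by
      rintro rfl
      exact hi (hunique (hj.2.trans hi₀.symm))
    exact ⟨j, hj, by rwa [Function.update_of_ne hjJ]⟩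

end GammaHamEvent

/-- In the interpolation `Γ_0 = H^{(k)}_{n,p}, Γ_1, …, Γ_N = D^{(k)}_{n,p}` (where
`N = C(n,k)`), for every `1 ≤ i ≤ N` the probability that `Γ_i` contains a directed
loose Hamilton cycle is at least the corresponding probability for `Γ_{i-1}`. -/
theorem statement10 (n k : ℕ) (hk : 3 ≤ k) (p : ℝ) (hp : p ∈ Set.Ioo (0 : ℝ) 1)
    (e : Fin (Nat.choose n k) ≃ {S : Finset (Fin n) // S.card = k})
    (i : ℕ) (hi1 : 1 ≤ i) (hiN : i ≤ Nat.choose n k) :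
    gammaMeasure n k p e (i - 1) (gammaHamEvent n k e) ≤
      gammaMeasure n k p e i (gammaHamEvent n k e) := by
  have := isProbabilityMeasure_bern hp.1.le hp.2.le
  have hfactor : ∀ (i' : ℕ) (j : Fin (Nat.choose n k)), IsProbabilityMeasure
      (if (j : ℕ) < i' then Measure.pi fun _ : OrdOf n k (e j).1 => bern p
        else (bern p).map fun (b : Bool) (_ : OrdOf n k (e j).1) => b) := fun _ _ ↦ by
    split
    · infer_instance
    · exact Measure.isProbabilityMeasure_map Measurable.of_discrete.aemeasurable
  let J : Fin (Nat.choose n k) := ⟨i - 1, by omega⟩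
  refine Measure.pi_le_pi_of_update J (fun j hj ↦ if_congr ?_ rfl rfl) .of_discrete fun ω ↦ ?_
  · have : (j : ℕ) ≠ i - 1 := fun h ↦ hj (Fin.ext h)
    omega
  rw [if_neg (lt_irrefl _), if_pos (show i - 1 < i by omega)]
  refine Measure.map_const_le_pi _
    ((isUpperSet_gammaHamEvent e).preimage Function.update_mono) fun htop hbot ↦ ?_
  obtain ⟨f, hf⟩ := exists_ordering_forall_update_mem_gammaHamEvent e hk J htop
    (by rwa [Function.update_idem])
  exact ⟨f, fun v hv ↦ by simpa using hf v hv⟩
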